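/- arXiv:1910.07327 — 2 statements merged into one kernel-verified Lean document; each statement's English description precedes it below -/
import Mathlib

section
/- If V and W are subspaces of a finite-dimensional Euclidean space with dim V = dim W, then V is partially orthogonal to W if and only if W is partially orthogonal to V. -/
open scoped RealInnerProductSpace

/-- If `V` and `W` are subspaces of a finite-dimensional Euclidean space with
`dim V = dim W`, then `V` is partially orthogonal to `W` iff `W` is partially
orthogonal to `V`. -/
theorem partially_orthogonal_symm_of_eq_finrank
    {X : Type*} [NormedAddCommGroup X] [InnerProductSpace ℝ X]
    [FiniteDimensional ℝ X] (V W : Submodule ℝ X)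
    (hdim : Module.finrank ℝ V = Module.finrank ℝ W) :
    (∃ v ∈ V, v ≠ 0 ∧ ∀ w ∈ W, ⟪v, w⟫ = 0) ↔
      (∃ w ∈ W, w ≠ 0 ∧ ∀ v ∈ V, ⟪w, v⟫ = 0) := by
  set T : V →L[ℝ] W := W.orthogonalProjectionOnto.comp V.subtypeL with hT
  set S : W →L[ℝ] V := V.orthogonalProjectionOnto.comp W.subtypeL with hS
  have hkerT : ∀ v : V, v ∈ LinearMap.ker (T : V →ₗ[ℝ] W) ↔ ∀ w ∈ W, ⟪(v : X), w⟫ = 0 := by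
    intro v
    rw [LinearMap.mem_ker]
    change W.orthogonalProjectionOnto (v : X) = 0 ↔ _
    rw [Submodule.orthogonalProjectionOnto_eq_zero_iff]
    exact Submodule.mem_orthogonal' W v
  have hkerS : ∀ w : W, w ∈ LinearMap.ker (S : W →ₗ[ℝ] V) ↔ ∀ v ∈ V, ⟪(w : X), v⟫ = 0 := by
    intro w
    rw [LinearMap.mem_ker]
    change V.orthogonalProjectionOnto (w : X) = 0 ↔ _
    rw [Submodule.orthogonalProjectionOnto_eq_zero_iff]
    exact Submodule.mem_orthogonal' V w
  -- ker S = (range T)ᗮ as submodules of W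
  have hkerS' : LinearMap.ker (S : W →ₗ[ℝ] V) = (LinearMap.range (T : V →ₗ[ℝ] W))ᗮ := by
    ext w
    rw [hkerS, Submodule.mem_orthogonal]
    constructor
    · rintro h _ ⟨v, rfl⟩
      have : ⟪T v, w⟫ = ⟪(v : X), (w : X)⟫ := by
        change ⟪W.orthogonalProjectionOnto (v : X), w⟫ = _
        rw [Submodule.inner_orthogonalProjectionOnto_eq_of_mem_right]
      rw [ContinuousLinearMap.coe_coe, this, real_inner_comm]
      exact h v v.2
    · intro h v hv
      have := h (T ⟨v, hv⟩) ⟨⟨v, hv⟩, rfl⟩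
      have h2 : ⟪T ⟨v, hv⟩, w⟫ = ⟪v, (w : X)⟫ := by
        change ⟪W.orthogonalProjectionOnto v, w⟫ = _
        rw [Submodule.inner_orthogonalProjectionOnto_eq_of_mem_right]
      rw [h2] at this
      rw [real_inner_comm]
      exact this
  have h1 : Module.finrank ℝ (LinearMap.ker (S : W →ₗ[ℝ] V)) + Module.finrank ℝ (LinearMap.range (T : V →ₗ[ℝ] W))
      = Module.finrank ℝ W := by
    rw [hkerS']
    rw [add_comm]
    exact Submodule.finrank_add_finrank_orthogonal _
  have h2 : Module.finrank ℝ (LinearMap.range (T : V →ₗ[ℝ] W)) + Module.finrank ℝ (LinearMap.ker (T : V →ₗ[ℝ] W))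
      = Module.finrank ℝ V := LinearMap.finrank_range_add_finrank_ker (T : V →ₗ[ℝ] W)
  have hkk : Module.finrank ℝ (LinearMap.ker (T : V →ₗ[ℝ] W)) = Module.finrank ℝ (LinearMap.ker (S : W →ₗ[ℝ] V)) := by
    omega
  constructor
  · rintro ⟨v, hv, hv0, hvw⟩
    have hmem : (⟨v, hv⟩ : V) ∈ LinearMap.ker (T : V →ₗ[ℝ] W) := (hkerT _).mpr hvw
    have hne : LinearMap.ker (T : V →ₗ[ℝ] W) ≠ ⊥ := by
      intro hbot
      rw [hbot, Submodule.mem_bot] at hmem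
      exact hv0 (congrArg Subtype.val hmem)
    have hpos : 0 < Module.finrank ℝ (LinearMap.ker (S : W →ₗ[ℝ] V)) := by
      rw [← hkk]
      rw [Nat.pos_iff_ne_zero]
      intro h0
      exact hne (Submodule.finrank_eq_zero.mp h0)
    obtain ⟨w, hw⟩ := Module.finrank_pos_iff_exists_ne_zero.mp hpos
    refine ⟨((w : W) : X), (w : W).2, ?_, (hkerS _).mp w.2⟩
    exact fun h => hw (Subtype.ext (Subtype.ext h))
  · rintro ⟨w, hw, hw0, hwv⟩
    have hmem : (⟨w, hw⟩ : W) ∈ LinearMap.ker (S : W →ₗ[ℝ] V) := (hkerS _).mpr hwv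
    have hne : LinearMap.ker (S : W →ₗ[ℝ] V) ≠ ⊥ := by
      intro hbot
      rw [hbot, Submodule.mem_bot] at hmem
      exact hw0 (congrArg Subtype.val hmem)
    have hpos : 0 < Module.finrank ℝ (LinearMap.ker (T : V →ₗ[ℝ] W)) := by
      rw [hkk]
      rw [Nat.pos_iff_ne_zero]
      intro h0
      exact hne (Submodule.finrank_eq_zero.mp h0)
    obtain ⟨v, hv⟩ := Module.finrank_pos_iff_exists_ne_zero.mp hpos
    refine ⟨((v : V) : X), (v : V).2, ?_, (hkerT _).mp v.2⟩
    exact fun h => hv (Subtype.ext (Subtype.ext h))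
end

section
/- Let V, W be subspaces of a finite-dimensional Euclidean space X with dim V = p, and let v₁ ∧ ⋯ ∧ v_p be a p-blade spanning ⋀^p V. Then the norm of the orthogonal projection of v₁ ∧ ⋯ ∧ v_p onto ⋀^p W equals ‖P_W v₁ ∧ ⋯ ∧ P_W v_p‖, where P_W is the orthogonal projection X → W extended to exterior powers. -/
open scoped RealInnerProductSpace

/-- The blade (wedge product) of a finite family of vectors in the exterior
algebra. -/
noncomputable def blade {X : Type*} [NormedAddCommGroup X] [InnerProductSpace ℝ X]
    {p : ℕ} (v : Fin p → X) : ExteriorAlgebra ℝ X :=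
  (List.ofFn (fun i => ExteriorAlgebra.ι ℝ (v i))).prod

/-- Let `V, W` be subspaces of a finite-dimensional Euclidean space `X` with
`dim V = p`, and let `v₁∧⋯∧v_p` be a `p`-blade spanning `⋀^p V`.  The exterior
algebra carries the determinant (Gram) inner product `ip`; `⋀^p W` is the span
of the blades of vectors of `W`, and `D` is the orthogonal projection of
`v₁∧⋯∧v_p` onto `⋀^p W` (characterized by `D ∈ ⋀^p W` and `v₁∧⋯∧v_p − D ⊥ ⋀^p W`).
Then `‖D‖ = ‖P_W v₁ ∧ ⋯ ∧ P_W v_p‖`, where `P_W : X → W` is the orthogonal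
projection applied factor-wise. -/
theorem norm_proj_exterior_eq_norm_blade_proj
    {X : Type*} [NormedAddCommGroup X] [InnerProductSpace ℝ X]
    [FiniteDimensional ℝ X]
    (ip : ExteriorAlgebra ℝ X →ₗ[ℝ] ExteriorAlgebra ℝ X →ₗ[ℝ] ℝ)
    (hsymm : ∀ x y : ExteriorAlgebra ℝ X, ip x y = ip y x)
    (hGram : ∀ {p : ℕ} (u w : Fin p → X),
      ip (blade u) (blade w) = (Matrix.of fun i j => (⟪u i, w j⟫ : ℝ)).det)
    (V W : Submodule ℝ X)
    {p : ℕ} (hV : Module.finrank ℝ V = p) (v : Fin p → X)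
    (hvV : ∀ i, v i ∈ V) (hspan : Submodule.span ℝ (Set.range v) = V)
    (hA : blade v ≠ 0)
    (D : ExteriorAlgebra ℝ X)
    (hD : D ∈ Submodule.span ℝ
      {x : ExteriorAlgebra ℝ X | ∃ w : Fin p → X, (∀ i, w i ∈ W) ∧ x = blade w})
    (hperp : ∀ y ∈ Submodule.span ℝ
      {x : ExteriorAlgebra ℝ X | ∃ w : Fin p → X, (∀ i, w i ∈ W) ∧ x = blade w},
      ip (blade v - D) y = 0) :
    Real.sqrt (ip D D) =
      Real.sqrt (ip (blade fun i => (W.orthogonalProjection (v i) : X))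
        (blade fun i => (W.orthogonalProjection (v i) : X))) := by
  set M := Submodule.span ℝ
      {x : ExteriorAlgebra ℝ X | ∃ w : Fin p → X, (∀ i, w i ∈ W) ∧ x = blade w} with hM
  set Q : ExteriorAlgebra ℝ X := blade fun i => (W.orthogonalProjection (v i) : X) with hQ
  have hQM : Q ∈ M :=
    Submodule.subset_span ⟨_, fun i => (W.orthogonalProjection (v i)).2, rfl⟩
  have hperpQ : ∀ y ∈ M, ip (blade v - Q) y = 0 := by
    intro y hy
    induction hy using Submodule.span_induction with
    | mem x hx =>
      obtain ⟨w, hw, rfl⟩ := hx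
      have heq : ip (blade v) (blade w) = ip Q (blade w) := by
        rw [hQ, hGram, hGram]
        congr 1
        ext i j
        have h0 := Submodule.starProjection_inner_eq_zero (K := W) (v i) (w j) (hw j)
        rw [inner_sub_left, sub_eq_zero] at h0
        simpa [Matrix.of_apply] using h0
      simp [map_sub, LinearMap.sub_apply, heq]
    | zero => simp
    | add x y hx hy ihx ihy =>
      simp only [map_sub, LinearMap.sub_apply] at ihx ihy ⊢
      simp only [map_add]; linarith
    | smul a x hx ih =>
      simp only [map_sub, LinearMap.sub_apply] at ih ⊢
      simp only [map_smul, smul_eq_mul]; linear_combination a * ih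
  have hE : ∀ y ∈ M, ip (D - Q) y = 0 := by
    intro y hy
    have h1 := hperp y hy
    have h2 := hperpQ y hy
    simp only [map_sub, LinearMap.sub_apply] at h1 h2 ⊢
    linarith
  have key : ip D D = ip Q Q := by
    have e1 : ip (D - Q) D = 0 := hE D hD
    have e2 : ip (D - Q) Q = 0 := hE Q hQM
    have e3 : ip Q D = ip D Q := hsymm Q D
    simp only [map_sub, LinearMap.sub_apply] at e1 e2
    linarith
  rw [key]
end
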